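/- arXiv:1603.01355 — 3 statements merged into one kernel-verified Lean document; each statement's English description precedes it below -/
import Mathlib

section
/- If u₁, u₂ : Ω → ℂ are C¹ functions on an open set Ω ⊆ ℝ² with |u₂| ≡ 1, then the product u = u₁u₂ satisfies |∇u|² = |∇u₁|² + |u₁|² |∇u₂|² + 2 j(u₁)·j(u₂) pointwise, and in particular |∇u|² ≤ |∇u₁|² + |∇u₂|² + 2 j(u₁)·j(u₂) whenever |u₁| ≤ 1. -/
/-- The real pairing `(a+ib, c+id) = ac + bd` on complex numbers. -/
noncomputable def cpair (z w : ℂ) : ℝ := z.re * w.re + z.im * w.im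

/-!
Differentiating `|u₂|² ≡ 1` shows that every directional derivative `∂u₂` is orthogonal to `u₂`,
i.e. `∂u₂ = i t u₂` with `t = (i u₂, ∂u₂)`. Expanding `|∂(u₁u₂)|² = |u₂ ∂u₁ + u₁ ∂u₂|²` with this
gives the identity one direction at a time, and the inequality follows from `|u₁|² ≤ 1`.
-/

open Complex Topology
open scoped RealInnerProductSpace

lemma cpair_eq_inner (z w : ℂ) : cpair z w = ⟪z, w⟫ := by
  simp only [cpair, Complex.inner, mul_re, conj_re, conj_im]
  ring

lemma inner_fderiv_eq_zero_of_norm_eventually_const {E F : Type*} [NormedAddCommGroup E]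
    [NormedSpace ℝ E] [NormedAddCommGroup F] [InnerProductSpace ℝ F] {f : E → F} {x : E}
    {c : ℝ} (hf : DifferentiableAt ℝ f x) (hc : ∀ᶠ y in 𝓝 x, ‖f y‖ = c) (v : E) :
    ⟪f x, fderiv ℝ f x v⟫ = 0 := by
  have hconst : HasFDerivAt (fun y => ‖f y‖ ^ 2) (0 : E →L[ℝ] ℝ) x :=
    (hasFDerivAt_const (c ^ 2) x).congr_of_eventuallyEq (hc.mono fun y hy => by simp only [hy])
  have hzero := congrArg (fun L : E →L[ℝ] ℝ => L v) (hf.hasFDerivAt.norm_sq.unique hconst)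
  simpa using hzero

lemma sq_norm_mul_add_mul_of_norm_eq_one {a b p q : ℂ} (hb : ‖b‖ = 1) (hq : cpair b q = 0) :
    ‖a * q + b * p‖ ^ 2 =
      ‖p‖ ^ 2 + ‖a‖ ^ 2 * ‖q‖ ^ 2 + 2 * (cpair (I * a) p * cpair (I * b) q) := by
  have hb' : b.re * b.re + b.im * b.im = 1 := by
    rw [← normSq_apply, ← Complex.sq_norm, hb, one_pow]
  simp only [Complex.sq_norm, normSq_apply, cpair, add_re, add_im, mul_re, mul_im, I_re, I_im]
    at hq ⊢
  linear_combination (p.re ^ 2 + p.im ^ 2) * hb' + 2 * (a.re * p.re + a.im * p.im) * hq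

lemma sq_norm_fderiv_mul_apply {E : Type*} [NormedAddCommGroup E] [NormedSpace ℝ E]
    {u₁ u₂ : E → ℂ} {x : E} (h₁ : DifferentiableAt ℝ u₁ x) (h₂ : DifferentiableAt ℝ u₂ x)
    (hmod : ∀ᶠ y in 𝓝 x, ‖u₂ y‖ = 1) (v : E) :
    ‖fderiv ℝ (fun y => u₁ y * u₂ y) x v‖ ^ 2 =
      ‖fderiv ℝ u₁ x v‖ ^ 2 + ‖u₁ x‖ ^ 2 * ‖fderiv ℝ u₂ x v‖ ^ 2 +
        2 * (cpair (I * u₁ x) (fderiv ℝ u₁ x v) * cpair (I * u₂ x) (fderiv ℝ u₂ x v)) := by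
  have horth : cpair (u₂ x) (fderiv ℝ u₂ x v) = 0 := by
    rw [cpair_eq_inner]
    exact inner_fderiv_eq_zero_of_norm_eventually_const h₂ hmod v
  rw [fderiv_fun_mul h₁ h₂, add_apply, smul_apply, smul_apply, smul_eq_mul, smul_eq_mul]
  exact sq_norm_mul_add_mul_of_norm_eq_one hmod.self_of_nhds horth

/-- If `u₁, u₂ : Ω → ℂ` are `C¹` on an open `Ω ⊆ ℝ²` with `|u₂| ≡ 1`, then the product
`u = u₁ u₂` satisfies `|∇u|² = |∇u₁|² + |u₁|²|∇u₂|² + 2 j(u₁)·j(u₂)` pointwise, and in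
particular `|∇u|² ≤ |∇u₁|² + |∇u₂|² + 2 j(u₁)·j(u₂)` whenever `|u₁| ≤ 1`. -/
theorem stmt3 (Ω : Set (ℝ × ℝ)) (hΩ : IsOpen Ω) (u₁ u₂ : ℝ × ℝ → ℂ)
    (h1 : ContDiffOn ℝ 1 u₁ Ω) (h2 : ContDiffOn ℝ 1 u₂ Ω)
    (hmod : ∀ y ∈ Ω, ‖u₂ y‖ = 1)
    (x : ℝ × ℝ) (hx : x ∈ Ω) :
    (‖fderivWithin ℝ (fun y => u₁ y * u₂ y) Ω x (1, 0)‖ ^ 2 +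
        ‖fderivWithin ℝ (fun y => u₁ y * u₂ y) Ω x (0, 1)‖ ^ 2 =
      (‖fderivWithin ℝ u₁ Ω x (1, 0)‖ ^ 2 +
          ‖fderivWithin ℝ u₁ Ω x (0, 1)‖ ^ 2) +
        ‖u₁ x‖ ^ 2 *
          (‖fderivWithin ℝ u₂ Ω x (1, 0)‖ ^ 2 +
            ‖fderivWithin ℝ u₂ Ω x (0, 1)‖ ^ 2) +
        2 * (cpair (Complex.I * u₁ x) (fderivWithin ℝ u₁ Ω x (1, 0)) *
              cpair (Complex.I * u₂ x) (fderivWithin ℝ u₂ Ω x (1, 0)) +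
            cpair (Complex.I * u₁ x) (fderivWithin ℝ u₁ Ω x (0, 1)) *
              cpair (Complex.I * u₂ x) (fderivWithin ℝ u₂ Ω x (0, 1)))) ∧
    (‖u₁ x‖ ≤ 1 →
      ‖fderivWithin ℝ (fun y => u₁ y * u₂ y) Ω x (1, 0)‖ ^ 2 +
          ‖fderivWithin ℝ (fun y => u₁ y * u₂ y) Ω x (0, 1)‖ ^ 2 ≤
        (‖fderivWithin ℝ u₁ Ω x (1, 0)‖ ^ 2 +
            ‖fderivWithin ℝ u₁ Ω x (0, 1)‖ ^ 2) +
          (‖fderivWithin ℝ u₂ Ω x (1, 0)‖ ^ 2 +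
            ‖fderivWithin ℝ u₂ Ω x (0, 1)‖ ^ 2) +
          2 * (cpair (Complex.I * u₁ x) (fderivWithin ℝ u₁ Ω x (1, 0)) *
                cpair (Complex.I * u₂ x) (fderivWithin ℝ u₂ Ω x (1, 0)) +
              cpair (Complex.I * u₁ x) (fderivWithin ℝ u₁ Ω x (0, 1)) *
                cpair (Complex.I * u₂ x) (fderivWithin ℝ u₂ Ω x (0, 1)))) := by
  have hΩx : Ω ∈ 𝓝 x := hΩ.mem_nhds hx
  have hd₁ : DifferentiableAt ℝ u₁ x := (h1.differentiableOn one_ne_zero).differentiableAt hΩx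
  have hd₂ : DifferentiableAt ℝ u₂ x := (h2.differentiableOn one_ne_zero).differentiableAt hΩx
  simp only [fderivWithin_of_isOpen hΩ hx,
    sq_norm_fderiv_mul_apply hd₁ hd₂ (Filter.eventually_of_mem hΩx hmod)]
  refine ⟨by ring, fun hu₁ => ?_⟩
  have hgrad₂ := mul_le_of_le_one_left
    (by positivity : 0 ≤ ‖fderiv ℝ u₂ x (1, 0)‖ ^ 2 + ‖fderiv ℝ u₂ x (0, 1)‖ ^ 2)
    (pow_le_one₀ (n := 2) (norm_nonneg (u₁ x)) hu₁)
  rw [mul_add] at hgrad₂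
  linarith
end

section
/- (Reflection extension for smooth vector fields preserves the curl measure) Let Q = l × (−1,1) × (0,L) with l ⊂ ℝ an open interval, Q⁺ = l × (0,1) × (0,L), Γ = l × {0} × (0,L). Given v = (v¹,v²) ∈ C^∞(\overline{Q⁺}; ℝ²), define Tv on Q by Tv(x₁,x₂,x₃) = (v¹(x₁,x₂,x₃), v²(x₁,x₂,x₃)) for x₂ ≥ 0 and Tv(x₁,x₂,x₃) = (v¹(x₁,−x₂,x₃), −v²(x₁,−x₂,x₃)) for x₂ < 0. Then Tv ∈ L²(Q;ℝ²), its distributional planar curl is a finite Radon measure on Q, |curl Tv|(Γ) = 0, and |curl Tv|(Q) ≤ 2 |curl v|(Q⁺). -/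
open MeasureTheory


open MeasureTheory Set

noncomputable section Stmt13Aux

abbrev E3 : Type := (ℝ × ℝ) × ℝ

def rfl2 (x : E3) : E3 := ((x.1.1, -x.1.2), x.2)

def Tv1 (v : E3 → ℝ × ℝ) (x : E3) : ℝ := if 0 ≤ x.1.2 then (v x).1 else (v (rfl2 x)).1
def Tv2 (v : E3 → ℝ × ℝ) (x : E3) : ℝ := if 0 ≤ x.1.2 then (v x).2 else -(v (rfl2 x)).2
def curl2 (v : E3 → ℝ × ℝ) (x : E3) : ℝ :=
  fderiv ℝ (fun y => (v y).2) x ((1, 0), 0) - fderiv ℝ (fun y => (v y).1) x ((0, 1), 0)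
def gfun (v : E3 → ℝ × ℝ) (x : E3) : ℝ :=
  if 0 ≤ x.1.2 then curl2 v x else -curl2 v (rfl2 x)
def F2 (v : E3 → ℝ × ℝ) (φ : E3 → ℝ) (x : E3) : ℝ :=
  (if 0 ≤ x.1.2 then fderiv ℝ (fun y => (v y).1) x ((0, 1), 0)
    else -fderiv ℝ (fun y => (v y).1) (rfl2 x) ((0, 1), 0)) * φ x
  + Tv1 v x * fderiv ℝ φ x ((0, 1), 0)
def G1 (v : E3 → ℝ × ℝ) (φ : E3 → ℝ) (x : E3) : ℝ :=
  (if 0 ≤ x.1.2 then fderiv ℝ (fun y => (v y).2) x ((1, 0), 0)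
    else -fderiv ℝ (fun y => (v y).2) (rfl2 x) ((1, 0), 0)) * φ x
  + Tv2 v x * fderiv ℝ φ x ((1, 0), 0)

lemma pointwise_alg (v : E3 → ℝ × ℝ) (φ : E3 → ℝ) (x : E3) :
    Tv1 v x * fderiv ℝ φ x ((0, 1), 0) - Tv2 v x * fderiv ℝ φ x ((1, 0), 0) =
      F2 v φ x - G1 v φ x + gfun v x * φ x := by
  by_cases h : 0 ≤ x.1.2 <;> simp only [Tv1, Tv2, gfun, F2, G1, curl2, if_pos, if_neg, h,
    if_true, if_false] <;> ring

lemma continuous_rfl2 : Continuous rfl2 := by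
  unfold rfl2; fun_prop

lemma exists_bound {f : E3 → ℝ} (hc : Continuous f) (hs : HasCompactSupport f) :
    ∃ C, ∀ x, |f x| ≤ C := by
  obtain ⟨x₀, hx₀⟩ := hc.abs.exists_forall_ge_of_hasCompactSupport hs.abs
  exact ⟨|f x₀|, hx₀⟩

lemma exists_bound_ite {a b ψ : E3 → ℝ} (ha : Continuous a) (hb : Continuous b)
    (hψ : Continuous ψ) (hψs : HasCompactSupport ψ) :
    ∃ C, ∀ x, |(if 0 ≤ x.1.2 then a x else b x) * ψ x| ≤ C := by
  obtain ⟨C₁, h₁⟩ := exists_bound (ha.mul hψ) (hψs.mul_left)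
  obtain ⟨C₂, h₂⟩ := exists_bound (hb.mul hψ) (hψs.mul_left)
  refine ⟨|C₁| + |C₂|, fun x => ?_⟩
  by_cases h : 0 ≤ x.1.2
  · rw [if_pos h]
    have : |a x * ψ x| ≤ C₁ := h₁ x
    have := le_abs_self C₁; have := abs_nonneg C₂; linarith
  · rw [if_neg h]
    have : |b x * ψ x| ≤ C₂ := h₂ x
    have := le_abs_self C₂; have := abs_nonneg C₁; linarith

lemma measurable_ite2 {a b : E3 → ℝ} (ha : Measurable a) (hb : Measurable b) :
    Measurable (fun x => if 0 ≤ x.1.2 then a x else b x) := by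
  have hs : MeasurableSet {x : E3 | 0 ≤ x.1.2} :=
    measurableSet_le measurable_const (measurable_snd.comp measurable_fst)
  exact Measurable.ite hs ha hb

end Stmt13Aux

-- Part 2: derivative helpers and FTC lemmas
section Part2

lemma hasDerivAt_slice {w : E3 → ℝ} (hw : Differentiable ℝ w) {γ : ℝ → E3} {γ' : E3} {t : ℝ}
    (hγ : HasDerivAt γ γ' t) : HasDerivAt (fun s => w (γ s)) (fderiv ℝ w (γ t) γ') t :=
  (hw (γ t)).hasFDerivAt.comp_hasDerivAt t hγ

lemma curve_vert (x₁ z t : ℝ) : HasDerivAt (fun s : ℝ => (((x₁, s), z) : E3)) ((0, 1), 0) t :=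
  HasDerivAt.prodMk (HasDerivAt.prodMk (hasDerivAt_const t x₁) (hasDerivAt_id t)) (hasDerivAt_const t z)

lemma curve_vertneg (x₁ z t : ℝ) :
    HasDerivAt (fun s : ℝ => (((x₁, -s), z) : E3)) ((0, -1), 0) t :=
  HasDerivAt.prodMk (HasDerivAt.prodMk (hasDerivAt_const t x₁) (hasDerivAt_id t).neg) (hasDerivAt_const t z)

lemma curve_horiz (x₂ z t : ℝ) : HasDerivAt (fun s : ℝ => (((s, x₂), z) : E3)) ((1, 0), 0) t :=
  HasDerivAt.prodMk (HasDerivAt.prodMk (hasDerivAt_id t) (hasDerivAt_const t x₂)) (hasDerivAt_const t z)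

lemma fderiv_neg_vec {w : E3 → ℝ} (y : E3) :
    fderiv ℝ w y ((0, -1), 0) = -fderiv ℝ w y ((0, 1), 0) := by
  have : (((0 : ℝ), (-1 : ℝ)), (0 : ℝ)) = -(((0 : ℝ), (1 : ℝ)), (0 : ℝ)) := by
    simp [Prod.ext_iff]
  rw [this, map_neg]

lemma cont_fderiv_apply {n : WithTop ℕ∞} {w : E3 → ℝ} (hw : ContDiff ℝ n w) (hn : 1 ≤ n)
    (u : E3) : Continuous fun y => fderiv ℝ w y u :=
  (hw.continuous_fderiv (ENat.one_le_iff_ne_zero_withTop.mp hn)).clm_apply continuous_const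

/-- vertical FTC -/
lemma vert_ftc {v : E3 → ℝ × ℝ} {φ : E3 → ℝ} (hv : ContDiff ℝ (⊤ : ℕ∞) v) (hφ : ContDiff ℝ 1 φ)
    (x₁ z : ℝ) (h1 : φ ((x₁, 1), z) = 0) (hm1 : φ ((x₁, -1), z) = 0) :
    ∫ t in Ioo (-1 : ℝ) 1, F2 v φ ((x₁, t), z) = 0 := by
  have hv1 : ContDiff ℝ (⊤ : ℕ∞) (fun y => (v y).1) := hv.fst
  have hv1d : Differentiable ℝ (fun y => (v y).1) := hv1.differentiable (by simp)
  have hφd : Differentiable ℝ φ := hφ.differentiable one_ne_zero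
  set v1 : E3 → ℝ := fun y => (v y).1
  set fp : ℝ → ℝ := fun t => v1 ((x₁, t), z) * φ ((x₁, t), z) with hfp
  set fm : ℝ → ℝ := fun t => v1 ((x₁, -t), z) * φ ((x₁, t), z) with hfm
  set Dp : ℝ → ℝ := fun t => fderiv ℝ v1 ((x₁, t), z) ((0, 1), 0) * φ ((x₁, t), z)
      + v1 ((x₁, t), z) * fderiv ℝ φ ((x₁, t), z) ((0, 1), 0) with hDp
  set Dm : ℝ → ℝ := fun t => (-fderiv ℝ v1 ((x₁, -t), z) ((0, 1), 0)) * φ ((x₁, t), z)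
      + v1 ((x₁, -t), z) * fderiv ℝ φ ((x₁, t), z) ((0, 1), 0) with hDm
  have hdp : ∀ t, HasDerivAt fp (Dp t) t := fun t =>
    (hasDerivAt_slice hv1d (curve_vert x₁ z t)).mul (hasDerivAt_slice hφd (curve_vert x₁ z t))
  have hdm : ∀ t, HasDerivAt fm (Dm t) t := by
    intro t
    have h1' := (hasDerivAt_slice hv1d (curve_vertneg x₁ z t)).mul
      (hasDerivAt_slice hφd (curve_vert x₁ z t))
    rwa [fderiv_neg_vec] at h1'
  have hDpc : Continuous Dp := by
    refine Continuous.add (Continuous.mul ?_ ?_) (Continuous.mul ?_ ?_)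
    · exact (cont_fderiv_apply hv1 (by simp) _).comp (by fun_prop)
    · exact hφ.continuous.comp (by fun_prop)
    · exact hv1.continuous.comp (by fun_prop)
    · exact (cont_fderiv_apply hφ le_rfl _).comp (by fun_prop)
  have hDmc : Continuous Dm := by
    refine Continuous.add (Continuous.mul ?_ ?_) (Continuous.mul ?_ ?_)
    · exact (((cont_fderiv_apply hv1 (by simp) _).comp (by fun_prop))).neg
    · exact hφ.continuous.comp (by fun_prop)
    · exact hv1.continuous.comp (by fun_prop)
    · exact (cont_fderiv_apply hφ le_rfl _).comp (by fun_prop)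
  set Fs : ℝ → ℝ := fun t => F2 v φ ((x₁, t), z) with hFsdef
  have hFs_eq : ∀ t, Fs t = if 0 ≤ t then Dp t else Dm t := by
    intro t
    simp only [hFsdef, F2, Tv1, rfl2, hDp, hDm]
    by_cases h : 0 ≤ t <;> simp [h] <;> ring
  have hint_p : IntervalIntegrable Fs volume 0 1 := by
    rw [intervalIntegrable_iff, uIoc_of_le (by norm_num : (0:ℝ) ≤ 1)]
    exact (hDpc.integrableOn_Ioc).congr_fun
      (fun t ht => by rw [hFs_eq t, if_pos (le_of_lt ht.1)]) measurableSet_Ioc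
  have hae : ∀ᵐ t ∂(volume.restrict (Ioc (-1:ℝ) 0)), Dm t = Fs t := by
    rw [Filter.eventually_iff, mem_ae_iff]
    rw [Measure.restrict_apply' measurableSet_Ioc]
    refine measure_mono_null (fun t ht => ?_) (by simp : volume ({(0:ℝ)} : Set ℝ) = 0)
    simp only [mem_inter_iff, mem_setOf_eq, mem_compl_iff] at ht
    simp only [mem_singleton_iff]
    by_contra ht0
    exact ht.1 (by rw [hFs_eq t, if_neg (not_le.mpr (lt_of_le_of_ne ht.2.2 ht0))])
  have hint_m : IntervalIntegrable Fs volume (-1) 0 := by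
    rw [intervalIntegrable_iff, uIoc_of_le (by norm_num : (-1:ℝ) ≤ 0)]
    exact (hDmc.integrableOn_Ioc).congr hae
  have hIp : ∫ t in (0:ℝ)..1, Fs t = fp 1 - fp 0 := by
    rw [intervalIntegral.integral_congr (g := Dp)
      (fun t ht => by rw [hFs_eq t, if_pos]; exact (by simpa [uIcc_of_le] using ht : t ∈ Icc (0:ℝ) 1).1)]
    exact intervalIntegral.integral_eq_sub_of_hasDerivAt (fun t _ => hdp t)
      (hDpc.intervalIntegrable _ _)
  have hIm : ∫ t in (-1:ℝ)..0, Fs t = fm 0 - fm (-1) := by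
    have h0 : ∀ᵐ t : ℝ ∂volume, t ≠ 0 := by
      rw [ae_iff]
      refine measure_mono_null (fun t ht => ?_) (by simp : volume ({(0:ℝ)} : Set ℝ) = 0)
      simpa using ht
    rw [intervalIntegral.integral_congr_ae (g := Dm)
      (by filter_upwards [h0] with t ht hti
          rw [uIoc_of_le (by norm_num : (-1:ℝ) ≤ 0)] at hti
          rw [hFs_eq t, if_neg (not_le.mpr (lt_of_le_of_ne hti.2 ht))])]
    exact intervalIntegral.integral_eq_sub_of_hasDerivAt (fun t _ => hdm t)
      (hDmc.intervalIntegrable _ _)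
  have hsum : ∫ t in Ioo (-1:ℝ) 1, Fs t = (fm 0 - fm (-1)) + (fp 1 - fp 0) := by
    rw [← MeasureTheory.integral_Ioc_eq_integral_Ioo,
      ← intervalIntegral.integral_of_le (by norm_num : (-1:ℝ) ≤ 1),
      ← intervalIntegral.integral_add_adjacent_intervals hint_m hint_p, hIm, hIp]
  rw [hsum]
  have : fm 0 = fp 0 := by simp [hfm, hfp]
  rw [this, hfp, hfm]
  simp only [h1, hm1, mul_zero]
  ring

end Part2

-- Part 3: horizontal FTC
section Part3

/-- horizontal FTC: for every `x₂ z`, assuming `φ` vanishes at `x₁ = c, d`. -/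
lemma horiz_ftc {v : E3 → ℝ × ℝ} {φ : E3 → ℝ} (hv : ContDiff ℝ (⊤ : ℕ∞) v) (hφ : ContDiff ℝ 1 φ)
    {c d : ℝ} (hcd : c ≤ d) (x₂ z : ℝ) (hc : φ ((c, x₂), z) = 0) (hd : φ ((d, x₂), z) = 0) :
    ∫ t in Ioo c d, G1 v φ ((t, x₂), z) = 0 := by
  have hv2 : ContDiff ℝ (⊤ : ℕ∞) (fun y => (v y).2) := hv.snd
  have hv2d : Differentiable ℝ (fun y => (v y).2) := hv2.differentiable (by simp)
  have hφd : Differentiable ℝ φ := hφ.differentiable one_ne_zero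
  set v2 : E3 → ℝ := fun y => (v y).2
  rw [← MeasureTheory.integral_Ioc_eq_integral_Ioo,
    ← intervalIntegral.integral_of_le hcd]
  by_cases h : 0 ≤ x₂
  · set f : ℝ → ℝ := fun t => v2 ((t, x₂), z) * φ ((t, x₂), z) with hf
    set D : ℝ → ℝ := fun t => fderiv ℝ v2 ((t, x₂), z) ((1, 0), 0) * φ ((t, x₂), z)
        + v2 ((t, x₂), z) * fderiv ℝ φ ((t, x₂), z) ((1, 0), 0) with hD
    have hGs : ∀ t, G1 v φ ((t, x₂), z) = D t := by
      intro t; simp only [G1, Tv2, rfl2, hD]; simp [h]; rfl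
    have hDc : Continuous D := by
      refine Continuous.add (Continuous.mul ?_ ?_) (Continuous.mul ?_ ?_)
      · exact (cont_fderiv_apply hv2 (by simp) _).comp (by fun_prop)
      · exact hφ.continuous.comp (by fun_prop)
      · exact hv2.continuous.comp (by fun_prop)
      · exact (cont_fderiv_apply hφ le_rfl _).comp (by fun_prop)
    have hdf : ∀ t, HasDerivAt f (D t) t := fun t =>
      (hasDerivAt_slice hv2d (curve_horiz x₂ z t)).mul (hasDerivAt_slice hφd (curve_horiz x₂ z t))
    rw [intervalIntegral.integral_congr (g := D) (fun t _ => hGs t),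
      intervalIntegral.integral_eq_sub_of_hasDerivAt (fun t _ => hdf t)
        (hDc.intervalIntegrable _ _), hf]
    simp [hc, hd]
  · set f : ℝ → ℝ := fun t => -(v2 ((t, -x₂), z)) * φ ((t, x₂), z) with hf
    set D : ℝ → ℝ := fun t => -fderiv ℝ v2 ((t, -x₂), z) ((1, 0), 0) * φ ((t, x₂), z)
        + (-(v2 ((t, -x₂), z))) * fderiv ℝ φ ((t, x₂), z) ((1, 0), 0) with hD
    have hGs : ∀ t, G1 v φ ((t, x₂), z) = D t := by
      intro t; simp only [G1, Tv2, rfl2, hD]; simp [h]; rfl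
    have hDc : Continuous D := by
      refine Continuous.add (Continuous.mul ?_ ?_) (Continuous.mul ?_ ?_)
      · exact (((cont_fderiv_apply hv2 (by simp) _).comp (by fun_prop : Continuous fun t : ℝ => (((t, -x₂), z) : E3)))).neg
      · exact hφ.continuous.comp (by fun_prop)
      · exact (hv2.continuous.comp (by fun_prop : Continuous fun t : ℝ => (((t, -x₂), z) : E3))).neg
      · exact (cont_fderiv_apply hφ le_rfl _).comp (by fun_prop)
    have hdf : ∀ t, HasDerivAt f (D t) t := fun t =>
      ((hasDerivAt_slice hv2d (curve_horiz (-x₂) z t)).neg).mul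
        (hasDerivAt_slice hφd (curve_horiz x₂ z t))
    rw [intervalIntegral.integral_congr (g := D) (fun t _ => hGs t),
      intervalIntegral.integral_eq_sub_of_hasDerivAt (fun t _ => hdf t)
        (hDc.intervalIntegrable _ _), hf]
    simp [hc, hd]

end Part3

-- Part 4: integrability infrastructure and Fubini
section Part4

lemma finite_restrict {α : Type*} [MeasurableSpace α] [PseudoMetricSpace α] [ProperSpace α]
    [OpensMeasurableSpace α] {μ : Measure α} [IsFiniteMeasureOnCompacts μ] {s : Set α}
    (hs : Bornology.IsBounded s) : IsFiniteMeasure (μ.restrict s) := by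
  constructor
  rw [Measure.restrict_apply_univ]
  exact hs.measure_lt_top

lemma integrable_bdd {α : Type*} [MeasurableSpace α] {μ : Measure α} [IsFiniteMeasure μ]
    {f : α → ℝ} (hm : AEStronglyMeasurable f μ) {C : ℝ} (h : ∀ x, |f x| ≤ C) :
    Integrable f μ :=
  (integrable_const C).mono' hm (Filter.Eventually.of_forall fun x => by
    simpa [Real.norm_eq_abs] using h x)

/-- Fubini for the box, natural order x₁, x₂, z. -/
lemma triple_int {h : E3 → ℝ} {A B C : Set ℝ}
    (hi : Integrable h ((volume : Measure E3).restrict ((A ×ˢ B) ×ˢ C))) :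
    ∫ x in (A ×ˢ B) ×ˢ C, h x =
      ∫ x₁ in A, ∫ x₂ in B, ∫ z in C, h ((x₁, x₂), z) := by
  have e2 : (volume : Measure (ℝ × ℝ)).restrict (A ×ˢ B) =
      ((volume : Measure ℝ).restrict A).prod ((volume : Measure ℝ).restrict B) := by
    rw [Measure.prod_restrict, ← Measure.volume_eq_prod]
  have e1 : (volume : Measure E3).restrict ((A ×ˢ B) ×ˢ C) =
      ((volume : Measure (ℝ × ℝ)).restrict (A ×ˢ B)).prod ((volume : Measure ℝ).restrict C) := by
    rw [Measure.prod_restrict, ← Measure.volume_eq_prod]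
  rw [e1] at hi ⊢
  rw [MeasureTheory.integral_prod _ hi]
  have hK : Integrable (fun p : ℝ × ℝ => ∫ z in C, h (p, z))
      ((volume : Measure (ℝ × ℝ)).restrict (A ×ˢ B)) := by
    exact hi.integral_prod_left
  rw [show (∫ p in A ×ˢ B, ∫ z in C, h (p, z)) =
      ∫ p, (fun q : ℝ × ℝ => ∫ z in C, h (q, z)) p ∂((volume : Measure (ℝ×ℝ)).restrict (A ×ˢ B)) from rfl]
  rw [e2, MeasureTheory.integral_prod _ (by rwa [e2] at hK)]

/-- Fubini for the box, order x₂, x₁, z. -/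
lemma triple_int' {h : E3 → ℝ} {A B C : Set ℝ}
    (hi : Integrable h ((volume : Measure E3).restrict ((A ×ˢ B) ×ˢ C))) :
    ∫ x in (A ×ˢ B) ×ˢ C, h x =
      ∫ x₂ in B, ∫ x₁ in A, ∫ z in C, h ((x₁, x₂), z) := by
  rw [triple_int hi]
  have e2 : (volume : Measure (ℝ × ℝ)).restrict (A ×ˢ B) =
      ((volume : Measure ℝ).restrict A).prod ((volume : Measure ℝ).restrict B) := by
    rw [Measure.prod_restrict, ← Measure.volume_eq_prod]
  have e1 : (volume : Measure E3).restrict ((A ×ˢ B) ×ˢ C) =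
      ((volume : Measure (ℝ × ℝ)).restrict (A ×ˢ B)).prod ((volume : Measure ℝ).restrict C) := by
    rw [Measure.prod_restrict, ← Measure.volume_eq_prod]
  have hK : Integrable (fun p : ℝ × ℝ => ∫ z in C, h (p, z))
      (((volume : Measure ℝ).restrict A).prod ((volume : Measure ℝ).restrict B)) := by
    rw [e1] at hi
    rw [← e2]
    exact hi.integral_prod_left
  have hK' : Integrable (Function.uncurry fun x₁ x₂ => ∫ z in C, h ((x₁, x₂), z))
      (((volume : Measure ℝ).restrict A).prod ((volume : Measure ℝ).restrict B)) := by
    have : (Function.uncurry fun x₁ x₂ => ∫ z in C, h ((x₁, x₂), z)) =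
        fun p : ℝ × ℝ => ∫ z in C, h (p, z) := by
      funext p; simp [Function.uncurry]
    rw [this]; exact hK
  exact MeasureTheory.integral_integral_swap hK'

end Part4

-- Part 5: the weak identity
section Part5

variable {v : E3 → ℝ × ℝ} {φ : E3 → ℝ} {c d L : ℝ}

lemma bounded_box (a b a' b' a'' b'' : ℝ) :
    Bornology.IsBounded ((Ioo a b ×ˢ Ioo a' b') ×ˢ Ioo a'' b'') :=
  ((Metric.isBounded_Ioo _ _).prod (Metric.isBounded_Ioo _ _)).prod (Metric.isBounded_Ioo _ _)

lemma bounded_box2 (a b a' b' : ℝ) : Bornology.IsBounded (Ioo a b ×ˢ Ioo a' b') :=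
  (Metric.isBounded_Ioo _ _).prod (Metric.isBounded_Ioo _ _)

section fixedvφ

variable (hv : ContDiff ℝ (⊤ : ℕ∞) v) (hφ : ContDiff ℝ 1 φ) (hφs : HasCompactSupport φ)

/-- Continuity and bounds package -/
lemma F2_meas (hv : ContDiff ℝ (⊤ : ℕ∞) v) (hφ : ContDiff ℝ 1 φ) : Measurable (F2 v φ) := by
  have hv1 : ContDiff ℝ (⊤ : ℕ∞) (fun y => (v y).1) := hv.fst
  unfold F2 Tv1
  exact ((measurable_ite2 (cont_fderiv_apply hv1 (by simp) _).measurable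
      (((cont_fderiv_apply hv1 (by simp) _).comp continuous_rfl2).neg.measurable)).mul
      hφ.continuous.measurable).add
    ((measurable_ite2 hv1.continuous.measurable
      ((hv1.continuous.comp continuous_rfl2).measurable)).mul
      ((cont_fderiv_apply hφ le_rfl _).measurable))

set_option maxHeartbeats 1000000 in
lemma F2_bdd (hv : ContDiff ℝ (⊤ : ℕ∞) v) (hφ : ContDiff ℝ 1 φ) (hφs : HasCompactSupport φ) :
    ∃ C, ∀ x, |F2 v φ x| ≤ C := by
  have hv1 : ContDiff ℝ (⊤ : ℕ∞) (fun y => (v y).1) := hv.fst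
  have hDφs : HasCompactSupport (fun y => fderiv ℝ φ y (((0:ℝ),(1:ℝ)),(0:ℝ))) :=
    (hφs.fderiv ℝ).comp_left (g := fun A : E3 →L[ℝ] ℝ => A (((0:ℝ),(1:ℝ)),(0:ℝ))) rfl
  obtain ⟨C₁, h₁⟩ := exists_bound_ite (cont_fderiv_apply hv1 (by simp) (((0:ℝ),(1:ℝ)),(0:ℝ)))
    (((cont_fderiv_apply hv1 (by simp) (((0:ℝ),(1:ℝ)),(0:ℝ))).comp continuous_rfl2).neg)
    hφ.continuous hφs
  obtain ⟨C₂, h₂⟩ := exists_bound_ite hv1.continuous (hv1.continuous.comp continuous_rfl2)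
    (cont_fderiv_apply hφ le_rfl (((0:ℝ),(1:ℝ)),(0:ℝ))) hDφs
  refine ⟨C₁ + C₂, fun x => ?_⟩
  unfold F2 Tv1
  exact (abs_add_le _ _).trans (add_le_add (h₁ x) (h₂ x))

lemma G1_meas (hv : ContDiff ℝ (⊤ : ℕ∞) v) (hφ : ContDiff ℝ 1 φ) : Measurable (G1 v φ) := by
  have hv2 : ContDiff ℝ (⊤ : ℕ∞) (fun y => (v y).2) := hv.snd
  unfold G1 Tv2
  exact ((measurable_ite2 (cont_fderiv_apply hv2 (by simp) _).measurable
      (((cont_fderiv_apply hv2 (by simp) _).comp continuous_rfl2).neg.measurable)).mul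
      hφ.continuous.measurable).add
    ((measurable_ite2 hv2.continuous.measurable
      ((hv2.continuous.comp continuous_rfl2).neg.measurable)).mul
      ((cont_fderiv_apply hφ le_rfl _).measurable))

set_option maxHeartbeats 1000000 in
lemma G1_bdd (hv : ContDiff ℝ (⊤ : ℕ∞) v) (hφ : ContDiff ℝ 1 φ) (hφs : HasCompactSupport φ) :
    ∃ C, ∀ x, |G1 v φ x| ≤ C := by
  have hv2 : ContDiff ℝ (⊤ : ℕ∞) (fun y => (v y).2) := hv.snd
  have hDφs : HasCompactSupport (fun y => fderiv ℝ φ y (((1:ℝ),(0:ℝ)),(0:ℝ))) :=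
    (hφs.fderiv ℝ).comp_left (g := fun A : E3 →L[ℝ] ℝ => A (((1:ℝ),(0:ℝ)),(0:ℝ))) rfl
  obtain ⟨C₁, h₁⟩ := exists_bound_ite (cont_fderiv_apply hv2 (by simp) (((1:ℝ),(0:ℝ)),(0:ℝ)))
    (((cont_fderiv_apply hv2 (by simp) (((1:ℝ),(0:ℝ)),(0:ℝ))).comp continuous_rfl2).neg)
    hφ.continuous hφs
  obtain ⟨C₂, h₂⟩ := exists_bound_ite hv2.continuous ((hv2.continuous.comp continuous_rfl2).neg)
    (cont_fderiv_apply hφ le_rfl (((1:ℝ),(0:ℝ)),(0:ℝ))) hDφs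
  refine ⟨C₁ + C₂, fun x => ?_⟩
  unfold G1 Tv2
  exact (abs_add_le _ _).trans (add_le_add (h₁ x) (h₂ x))

lemma curl2_cont (hv : ContDiff ℝ (⊤ : ℕ∞) v) : Continuous (curl2 v) :=
  (cont_fderiv_apply hv.snd (by simp) _).sub (cont_fderiv_apply hv.fst (by simp) _)

lemma gfun_meas (hv : ContDiff ℝ (⊤ : ℕ∞) v) : Measurable (gfun v) := by
  unfold gfun
  exact measurable_ite2 (curl2_cont hv).measurable
    ((curl2_cont hv).comp continuous_rfl2).neg.measurable

lemma gphi_meas (hv : ContDiff ℝ (⊤ : ℕ∞) v) (hφ : ContDiff ℝ 1 φ) :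
    Measurable (fun x => gfun v x * φ x) :=
  (gfun_meas hv).mul hφ.continuous.measurable

lemma gphi_bdd (hv : ContDiff ℝ (⊤ : ℕ∞) v) (hφ : ContDiff ℝ 1 φ) (hφs : HasCompactSupport φ) :
    ∃ C, ∀ x, |gfun v x * φ x| ≤ C := by
  obtain ⟨C, h⟩ := exists_bound_ite (curl2_cont hv) ((curl2_cont hv).comp continuous_rfl2).neg
    hφ.continuous hφs
  exact ⟨C, fun x => by
    have := h x
    simp only [gfun]
    by_cases hx : 0 ≤ x.1.2 <;> simp only [if_pos, if_neg, hx, if_true, if_false] at this ⊢ <;>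
      simpa using this⟩

end fixedvφ

lemma intQ_F2_zero (hv : ContDiff ℝ (⊤ : ℕ∞) v) (hφ : ContDiff ℝ 1 φ) (hφs : HasCompactSupport φ)
    (hsupp : tsupport φ ⊆ (Ioo c d ×ˢ Ioo (-1 : ℝ) 1) ×ˢ Ioo 0 L) :
    ∫ x in (Ioo c d ×ˢ Ioo (-1 : ℝ) 1) ×ˢ Ioo 0 L, F2 v φ x = 0 := by
  obtain ⟨CF, hCF⟩ := F2_bdd hv hφ hφs
  haveI := finite_restrict (μ := (volume : Measure E3)) (bounded_box c d (-1) 1 0 L)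
  have hvan : ∀ (s : ℝ) (x₁ z : ℝ), s = 1 ∨ s = -1 → φ ((x₁, s), z) = 0 := by
    intro s x₁ z hs
    refine image_eq_zero_of_notMem_tsupport fun hmem => ?_
    have := hsupp hmem
    simp only [Set.mem_prod, Set.mem_Ioo] at this
    rcases hs with h | h <;> rw [h] at this <;> linarith [this.1.2.1, this.1.2.2]
  rw [triple_int (integrable_bdd (F2_meas hv hφ).aestronglyMeasurable hCF)]
  have inner : ∀ x₁ : ℝ, (∫ x₂ in Ioo (-1:ℝ) 1, ∫ z in Ioo 0 L, F2 v φ ((x₁, x₂), z)) = 0 := by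
    intro x₁
    have hsl : Integrable (Function.uncurry fun x₂ z => F2 v φ ((x₁, x₂), z))
        (((volume : Measure ℝ).restrict (Ioo (-1:ℝ) 1)).prod
          ((volume : Measure ℝ).restrict (Ioo 0 L))) := by
      rw [Measure.prod_restrict, ← Measure.volume_eq_prod]
      haveI := finite_restrict (μ := (volume : Measure (ℝ × ℝ))) (bounded_box2 (-1) 1 0 L)
      exact integrable_bdd ((F2_meas hv hφ).comp (by fun_prop :
          Measurable fun q : ℝ × ℝ => (((x₁, q.1), q.2) : E3))).aestronglyMeasurable
        (fun q => hCF _)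
    rw [MeasureTheory.integral_integral_swap hsl]
    have h0 : ∀ z, ∫ x₂ in Ioo (-1:ℝ) 1, F2 v φ ((x₁, x₂), z) = 0 := fun z =>
      vert_ftc hv hφ x₁ z (hvan 1 x₁ z (Or.inl rfl)) (hvan (-1) x₁ z (Or.inr rfl))
    simp [h0]
  simp [inner]

lemma intQ_G1_zero (hcd : c ≤ d) (hv : ContDiff ℝ (⊤ : ℕ∞) v) (hφ : ContDiff ℝ 1 φ)
    (hφs : HasCompactSupport φ)
    (hsupp : tsupport φ ⊆ (Ioo c d ×ˢ Ioo (-1 : ℝ) 1) ×ˢ Ioo 0 L) :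
    ∫ x in (Ioo c d ×ˢ Ioo (-1 : ℝ) 1) ×ˢ Ioo 0 L, G1 v φ x = 0 := by
  obtain ⟨CG, hCG⟩ := G1_bdd hv hφ hφs
  haveI := finite_restrict (μ := (volume : Measure E3)) (bounded_box c d (-1) 1 0 L)
  have hvan : ∀ (s : ℝ) (x₂ z : ℝ), s = c ∨ s = d → φ ((s, x₂), z) = 0 := by
    intro s x₂ z hs
    refine image_eq_zero_of_notMem_tsupport fun hmem => ?_
    have := hsupp hmem
    simp only [Set.mem_prod, Set.mem_Ioo] at this
    rcases hs with h | h <;> rw [h] at this <;> linarith [this.1.1.1, this.1.1.2]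
  rw [triple_int' (integrable_bdd (G1_meas hv hφ).aestronglyMeasurable hCG)]
  have inner : ∀ x₂ : ℝ, (∫ x₁ in Ioo c d, ∫ z in Ioo 0 L, G1 v φ ((x₁, x₂), z)) = 0 := by
    intro x₂
    have hsl : Integrable (Function.uncurry fun x₁ z => G1 v φ ((x₁, x₂), z))
        (((volume : Measure ℝ).restrict (Ioo c d)).prod
          ((volume : Measure ℝ).restrict (Ioo 0 L))) := by
      rw [Measure.prod_restrict, ← Measure.volume_eq_prod]
      haveI := finite_restrict (μ := (volume : Measure (ℝ × ℝ))) (bounded_box2 c d 0 L)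
      exact integrable_bdd ((G1_meas hv hφ).comp (by fun_prop :
          Measurable fun q : ℝ × ℝ => (((q.1, x₂), q.2) : E3))).aestronglyMeasurable
        (fun q => hCG _)
    rw [MeasureTheory.integral_integral_swap hsl]
    have h0 : ∀ z, ∫ x₁ in Ioo c d, G1 v φ ((x₁, x₂), z) = 0 := fun z =>
      horiz_ftc hv hφ hcd x₂ z (hvan c x₂ z (Or.inl rfl)) (hvan d x₂ z (Or.inr rfl))
    simp [h0]
  simp [inner]

/-- The weak identity. -/
lemma weak_id (hcd : c ≤ d) (hv : ContDiff ℝ (⊤ : ℕ∞) v) (hφ : ContDiff ℝ 1 φ)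
    (hφs : HasCompactSupport φ)
    (hsupp : tsupport φ ⊆ (Ioo c d ×ˢ Ioo (-1 : ℝ) 1) ×ˢ Ioo 0 L) :
    ∫ x in (Ioo c d ×ˢ Ioo (-1 : ℝ) 1) ×ˢ Ioo 0 L,
      (Tv1 v x * fderiv ℝ φ x ((0, 1), 0) - Tv2 v x * fderiv ℝ φ x ((1, 0), 0)) =
    ∫ x in (Ioo c d ×ˢ Ioo (-1 : ℝ) 1) ×ˢ Ioo 0 L, gfun v x * φ x := by
  haveI := finite_restrict (μ := (volume : Measure E3)) (bounded_box c d (-1) 1 0 L)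
  obtain ⟨CF, hCF⟩ := F2_bdd hv hφ hφs
  obtain ⟨CG, hCG⟩ := G1_bdd hv hφ hφs
  have hiF : Integrable (F2 v φ) (volume.restrict ((Ioo c d ×ˢ Ioo (-1:ℝ) 1) ×ˢ Ioo 0 L)) :=
    integrable_bdd (F2_meas hv hφ).aestronglyMeasurable hCF
  have hiG : Integrable (G1 v φ) (volume.restrict ((Ioo c d ×ˢ Ioo (-1:ℝ) 1) ×ˢ Ioo 0 L)) :=
    integrable_bdd (G1_meas hv hφ).aestronglyMeasurable hCG
  obtain ⟨Cg, hCg⟩ := gphi_bdd hv hφ hφs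
  have hig : Integrable (fun x => gfun v x * φ x)
      (volume.restrict ((Ioo c d ×ˢ Ioo (-1:ℝ) 1) ×ˢ Ioo 0 L)) :=
    integrable_bdd (gphi_meas hv hφ).aestronglyMeasurable hCg
  have heq : (fun x => Tv1 v x * fderiv ℝ φ x ((0, 1), 0) - Tv2 v x * fderiv ℝ φ x ((1, 0), 0)) =
      fun x => (F2 v φ x - G1 v φ x) + gfun v x * φ x := by
    funext x
    exact pointwise_alg v φ x
  rw [heq, MeasureTheory.integral_add (f := fun x => F2 v φ x - G1 v φ x) (hiF.sub hiG) hig,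
    MeasureTheory.integral_sub hiF hiG,
    intQ_F2_zero hv hφ hφs hsupp, intQ_G1_zero hcd hv hφ hφs hsupp]
  simp

end Part5

-- Part 6: bounds on Q, reflection, |g| integral
section Part6
open scoped NNReal ENNReal

lemma exists_boundOn {F : Type*} [SeminormedAddGroup F] {f : E3 → F} (hf : Continuous f)
    {s : Set E3} (hb : Bornology.IsBounded s) : ∃ M, ∀ x ∈ s, ‖f x‖ ≤ M := by
  obtain ⟨C, hC⟩ := hb.isCompact_closure.exists_bound_of_continuousOn hf.continuousOn
  exact ⟨C, fun x hx => hC x (subset_closure hx)⟩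

lemma rfl2_mem_Q {c d L : ℝ} {x : E3} (hx : x ∈ (Ioo c d ×ˢ Ioo (-1 : ℝ) 1) ×ˢ Ioo 0 L) :
    rfl2 x ∈ (Ioo c d ×ˢ Ioo (-1 : ℝ) 1) ×ˢ Ioo 0 L := by
  simp only [rfl2, Set.mem_prod, Set.mem_Ioo] at hx ⊢
  exact ⟨⟨hx.1.1, by constructor <;> linarith [hx.1.2.1, hx.1.2.2]⟩, hx.2⟩

lemma gfun_bddOn {v : E3 → ℝ × ℝ} (hv : ContDiff ℝ (⊤ : ℕ∞) v) (c d L : ℝ) :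
    ∃ M, ∀ x ∈ (Ioo c d ×ˢ Ioo (-1 : ℝ) 1) ×ˢ Ioo 0 L, |gfun v x| ≤ M := by
  obtain ⟨M₁, h₁⟩ := exists_boundOn (F := ℝ) (curl2_cont hv) (bounded_box c d (-1) 1 0 L)
  obtain ⟨M₂, h₂⟩ := exists_boundOn (F := ℝ) ((curl2_cont hv).comp continuous_rfl2)
    (bounded_box c d (-1) 1 0 L)
  refine ⟨max M₁ M₂, fun x hx => ?_⟩
  unfold gfun
  by_cases h : 0 ≤ x.1.2
  · rw [if_pos h]
    exact le_trans (by simpa using h₁ x hx) (le_max_left _ _)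
  · rw [if_neg h, abs_neg]
    exact le_trans (by simpa using h₂ x hx) (le_max_right _ _)

lemma integrable_bdd_on {μ : Measure E3} {s : Set E3} (hs : MeasurableSet s)
    [IsFiniteMeasure (μ.restrict s)] {f : E3 → ℝ} (hm : AEStronglyMeasurable f (μ.restrict s))
    {C : ℝ} (h : ∀ x ∈ s, |f x| ≤ C) : Integrable f (μ.restrict s) :=
  (integrable_const C).mono' hm ((ae_restrict_iff' hs).mpr (Filter.Eventually.of_forall
    fun x hx => by simpa [Real.norm_eq_abs] using h x hx))

lemma measurable_box (a b a' b' a'' b'' : ℝ) :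
    MeasurableSet ((Ioo a b ×ˢ Ioo a' b') ×ˢ Ioo a'' b'') :=
  ((measurableSet_Ioo.prod measurableSet_Ioo).prod measurableSet_Ioo)

lemma measurePreserving_rfl2 : MeasurePreserving rfl2 (volume : Measure E3) volume := by
  have h1 : MeasurePreserving (Prod.map (Prod.map (id : ℝ → ℝ) (Neg.neg : ℝ → ℝ)) (id : ℝ → ℝ))
      volume volume := by
    rw [Measure.volume_eq_prod]
    exact ((MeasurePreserving.id volume).prod (Measure.measurePreserving_neg volume)).prod
      (MeasurePreserving.id volume)
  exact h1

lemma measurableEmbedding_rfl2 : MeasurableEmbedding (rfl2 : E3 → E3) :=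
  (((MeasurableEquiv.refl ℝ).prodCongr (MeasurableEquiv.neg ℝ)).prodCongr
    (MeasurableEquiv.refl ℝ)).measurableEmbedding

lemma rfl2_preimage (c d L : ℝ) :
    rfl2 ⁻¹' ((Ioo c d ×ˢ Ioo (0 : ℝ) 1) ×ˢ Ioo 0 L) =
      (Ioo c d ×ˢ Ioo (-1 : ℝ) 0) ×ˢ Ioo 0 L := by
  ext x
  simp only [Set.mem_preimage, Set.mem_prod, Set.mem_Ioo, rfl2]
  constructor
  · rintro ⟨⟨h1, h2, h3⟩, h4⟩
    exact ⟨⟨h1, by linarith, by linarith⟩, h4⟩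
  · rintro ⟨⟨h1, h2, h3⟩, h4⟩
    exact ⟨⟨h1, by linarith, by linarith⟩, h4⟩

lemma vol_interface (c d L : ℝ) :
    (volume : Measure E3) ((Ioo c d ×ˢ ({0} : Set ℝ)) ×ˢ Ioo 0 L) = 0 := by
  rw [Measure.volume_eq_prod, Measure.prod_prod, Measure.volume_eq_prod, Measure.prod_prod]
  simp

/-- main computation of the total variation integral -/
lemma abs_g_split {v : E3 → ℝ × ℝ} (hv : ContDiff ℝ (⊤ : ℕ∞) v) (c d L : ℝ) :
    ∫ x in (Ioo c d ×ˢ Ioo (-1 : ℝ) 1) ×ˢ Ioo 0 L, |gfun v x| =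
      2 * ∫ x in (Ioo c d ×ˢ Ioo (0 : ℝ) 1) ×ˢ Ioo 0 L, |curl2 v x| := by
  haveI := finite_restrict (μ := (volume : Measure E3)) (bounded_box c d (-1) 1 0 L)
  obtain ⟨M, hM⟩ := gfun_bddOn hv c d L
  have hgm : Measurable fun x => |gfun v x| := (gfun_meas hv).abs
  have hint : IntegrableOn (fun x => |gfun v x|) ((Ioo c d ×ˢ Ioo (-1:ℝ) 1) ×ˢ Ioo 0 L) volume :=
    integrable_bdd_on (measurable_box c d (-1) 1 0 L) hgm.aestronglyMeasurable
      (fun x hx => by simpa using hM x hx)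
  -- split the box
  have hsplit : (Ioo c d ×ˢ Ioo (-1:ℝ) 1) ×ˢ Ioo 0 L =
      ((Ioo c d ×ˢ Ioo (-1:ℝ) 0) ×ˢ Ioo 0 L) ∪ ((Ioo c d ×ˢ Ico (0:ℝ) 1) ×ˢ Ioo 0 L) := by
    rw [show Ioo (-1:ℝ) 1 = Ioo (-1) 0 ∪ Ico 0 1 from
        (Set.Ioo_union_Ico_eq_Ioo (by norm_num) (by norm_num)).symm,
      Set.prod_union, Set.union_prod]
  have hdisj : Disjoint ((Ioo c d ×ˢ Ioo (-1:ℝ) 0) ×ˢ Ioo 0 L)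
      ((Ioo c d ×ˢ Ico (0:ℝ) 1) ×ˢ Ioo 0 L) := by
    rw [Set.disjoint_left]
    rintro x ⟨⟨-, hx2⟩, -⟩ ⟨⟨-, hx2'⟩, -⟩
    exact absurd hx2'.1 (not_le.mpr hx2.2)
  have hmeasIco : MeasurableSet ((Ioo c d ×ˢ Ico (0:ℝ) 1) ×ˢ Ioo 0 L) :=
    (measurableSet_Ioo.prod measurableSet_Ico).prod measurableSet_Ioo
  rw [hsplit, MeasureTheory.setIntegral_union hdisj hmeasIco
    (hint.mono_set (by rw [hsplit]; exact Set.subset_union_left))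
    (hint.mono_set (by rw [hsplit]; exact Set.subset_union_right))]
  -- right piece: Ico = Ioo a.e.
  have hIco_ae : ((Ioo c d ×ˢ Ico (0:ℝ) 1) ×ˢ Ioo 0 L : Set E3) =ᶠ[ae volume]
      ((Ioo c d ×ˢ Ioo (0:ℝ) 1) ×ˢ Ioo 0 L : Set E3) := by
    rw [ae_eq_set]
    constructor
    · refine measure_mono_null (fun x hx => ?_) (vol_interface c d L)
      obtain ⟨⟨⟨hx1, hx2⟩, hx4⟩, hx5⟩ := hx
      simp only [Set.mem_prod, Set.mem_Ioo, Set.mem_Ico, Set.mem_singleton_iff] at *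
      have : ¬ (0 < x.1.2) := fun h => hx5 ⟨⟨hx1, h, hx2.2⟩, hx4⟩
      exact ⟨⟨hx1, le_antisymm (not_lt.mp this) hx2.1⟩, hx4⟩
    · refine measure_mono_null (fun x hx => ?_) (measure_empty (μ := (volume : Measure E3)))
      obtain ⟨⟨⟨hx1, hx2⟩, hx4⟩, hx5⟩ := hx
      exact absurd ⟨⟨hx1, hx2.1.le, hx2.2⟩, hx4⟩ hx5
  rw [MeasureTheory.setIntegral_congr_set hIco_ae]
  -- on the positive box, |g| = |curl2|
  have hpos : ∫ x in (Ioo c d ×ˢ Ioo (0:ℝ) 1) ×ˢ Ioo 0 L, |gfun v x| =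
      ∫ x in (Ioo c d ×ˢ Ioo (0:ℝ) 1) ×ˢ Ioo 0 L, |curl2 v x| := by
    refine MeasureTheory.setIntegral_congr_fun (measurable_box c d 0 1 0 L) (fun x hx => ?_)
    obtain ⟨⟨-, hx2⟩, -⟩ := hx
    rw [gfun, if_pos hx2.1.le]
  -- on the negative box, change variables
  have hneg : ∫ x in (Ioo c d ×ˢ Ioo (-1:ℝ) 0) ×ˢ Ioo 0 L, |gfun v x| =
      ∫ x in (Ioo c d ×ˢ Ioo (0:ℝ) 1) ×ˢ Ioo 0 L, |curl2 v x| := by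
    have h1 : ∫ x in (Ioo c d ×ˢ Ioo (-1:ℝ) 0) ×ˢ Ioo 0 L, |gfun v x| =
        ∫ x in (Ioo c d ×ˢ Ioo (-1:ℝ) 0) ×ˢ Ioo 0 L, |curl2 v (rfl2 x)| := by
      refine MeasureTheory.setIntegral_congr_fun (measurable_box c d (-1) 0 0 L)
        (fun x hx => ?_)
      obtain ⟨⟨-, hx2⟩, -⟩ := hx
      rw [gfun, if_neg (not_le.mpr hx2.2), abs_neg]
    rw [h1, ← rfl2_preimage c d L]
    exact measurePreserving_rfl2.setIntegral_preimage_emb measurableEmbedding_rfl2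
      (fun y => |curl2 v y|) _
  rw [hpos, hneg]
  ring

end Part6

-- Part 7: helpers for the main theorem
section Part7
open scoped NNReal ENNReal

lemma toNNReal_sub_mul (a b : ℝ) :
    ((a.toNNReal : ℝ)) * b - (((-a).toNNReal : ℝ)) * b = a * b := by
  rw [Real.coe_toNNReal', Real.coe_toNNReal']
  rcases le_total 0 a with h | h
  · rw [sup_eq_left.mpr h, sup_eq_right.mpr (neg_nonpos.mpr h)]
    ring
  · rw [sup_eq_right.mpr h, sup_eq_left.mpr (neg_nonneg.mpr h)]
    ring

lemma ofReal_add_ofReal_neg (a : ℝ) :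
    ENNReal.ofReal a + ENNReal.ofReal (-a) = ENNReal.ofReal |a| := by
  rcases le_total 0 a with h | h
  · rw [abs_of_nonneg h, ENNReal.ofReal_eq_zero.mpr (neg_nonpos.mpr h), add_zero]
  · rw [abs_of_nonpos h, ENNReal.ofReal_eq_zero.mpr h, zero_add]

lemma coe_toNNReal_abs_le {a M : ℝ} (h : |a| ≤ M) : |((a.toNNReal : ℝ))| ≤ M := by
  rw [Real.coe_toNNReal']
  rcases le_total 0 a with h' | h'
  · rw [sup_eq_left.mpr h', abs_of_nonneg h']
    exact (le_abs_self a).trans h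
  · rw [sup_eq_right.mpr h']
    simpa using (abs_nonneg a).trans h

end Part7


open scoped NNReal ENNReal

/-- Reflection extension of smooth planar vector fields across the interface
`Γ = l × {0} × (0,L)`: for `v ∈ C^∞(closure Q⁺; ℝ²)` with `Q⁺ = l × (0,1) × (0,L)` and
`Q = l × (−1,1) × (0,L)`, the even/odd reflection `Tv` belongs to `L²(Q;ℝ²)`, its
distributional planar curl is a finite signed Radon measure on `Q` (represented by a
difference of two finite measures `μp − μn`), charging no mass on `Γ`, and its total
variation on `Q` is at most `2 |curl v|(Q⁺)`. -/
theorem stmt13 (c d L : ℝ) (hcd : c < d) (hL : 0 < L)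
    (v : (ℝ × ℝ) × ℝ → ℝ × ℝ) (hv : ContDiff ℝ (⊤ : ℕ∞) v) :
    ∃ μp μn : Measure ((ℝ × ℝ) × ℝ),
      IsFiniteMeasure μp ∧ IsFiniteMeasure μn ∧
      MemLp (fun p : (ℝ × ℝ) × ℝ =>
          if 0 ≤ p.1.2 then v p
          else ((v ((p.1.1, -p.1.2), p.2)).1, -(v ((p.1.1, -p.1.2), p.2)).2)) 2
        (volume.restrict ((Set.Ioo c d ×ˢ Set.Ioo (-1 : ℝ) 1) ×ˢ Set.Ioo 0 L)) ∧
      μp (((Set.Ioo c d ×ˢ Set.Ioo (-1 : ℝ) 1) ×ˢ Set.Ioo 0 L)ᶜ) = 0 ∧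
      μn (((Set.Ioo c d ×ˢ Set.Ioo (-1 : ℝ) 1) ×ˢ Set.Ioo 0 L)ᶜ) = 0 ∧
      (∀ φ : (ℝ × ℝ) × ℝ → ℝ, ContDiff ℝ 1 φ → HasCompactSupport φ →
        tsupport φ ⊆ (Set.Ioo c d ×ˢ Set.Ioo (-1 : ℝ) 1) ×ˢ Set.Ioo 0 L →
        ∫ x in (Set.Ioo c d ×ˢ Set.Ioo (-1 : ℝ) 1) ×ˢ Set.Ioo 0 L,
            (((if 0 ≤ x.1.2 then v x
                else ((v ((x.1.1, -x.1.2), x.2)).1, -(v ((x.1.1, -x.1.2), x.2)).2)).1 *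
                  fderiv ℝ φ x ((0, 1), 0)) -
              ((if 0 ≤ x.1.2 then v x
                else ((v ((x.1.1, -x.1.2), x.2)).1, -(v ((x.1.1, -x.1.2), x.2)).2)).2 *
                  fderiv ℝ φ x ((1, 0), 0))) =
          (∫ x, φ x ∂μp) - ∫ x, φ x ∂μn) ∧
      μp ((Set.Ioo c d ×ˢ ({0} : Set ℝ)) ×ˢ Set.Ioo 0 L) = 0 ∧
      μn ((Set.Ioo c d ×ˢ ({0} : Set ℝ)) ×ˢ Set.Ioo 0 L) = 0 ∧
      μp Set.univ + μn Set.univ ≤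
        ENNReal.ofReal (2 * ∫ x in (Set.Ioo c d ×ˢ Set.Ioo (0 : ℝ) 1) ×ˢ Set.Ioo 0 L,
          |fderiv ℝ (fun y => (v y).2) x ((1, 0), 0) -
            fderiv ℝ (fun y => (v y).1) x ((0, 1), 0)|) := by
  classical
  haveI := finite_restrict (μ := (volume : Measure E3)) (bounded_box c d (-1) 1 0 L)
  have hQm : MeasurableSet ((Ioo c d ×ˢ Ioo (-1:ℝ) 1) ×ˢ Ioo 0 L) :=
    measurable_box c d (-1) 1 0 L
  obtain ⟨Mg, hMg⟩ := gfun_bddOn hv c d L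
  have hgmeas : Measurable (gfun v) := gfun_meas hv
  set Q : Set E3 := (Ioo c d ×ˢ Ioo (-1:ℝ) 1) ×ˢ Ioo 0 L with hQdef
  set μp : Measure E3 :=
    (volume.restrict Q).withDensity (fun x => ENNReal.ofReal (gfun v x)) with hμp
  set μn : Measure E3 :=
    (volume.restrict Q).withDensity (fun x => ENNReal.ofReal (-gfun v x)) with hμn
  have hfin : ∀ f : E3 → ℝ, Measurable f → (∀ x ∈ Q, f x ≤ Mg) →
      IsFiniteMeasure ((volume.restrict Q).withDensity (fun x => ENNReal.ofReal (f x))) := by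
    intro f hf hb
    apply isFiniteMeasure_withDensity
    refine ne_of_lt (lt_of_le_of_lt (lintegral_mono_ae ((ae_restrict_iff' hQm).mpr
      (Filter.Eventually.of_forall fun x hx =>
        ENNReal.ofReal_le_ofReal (hb x hx)))) ?_)
    rw [lintegral_const]
    exact ENNReal.mul_lt_top ENNReal.ofReal_lt_top (measure_lt_top _ _)
  have hfinp : IsFiniteMeasure μp :=
    hfin _ hgmeas (fun x hx => (le_abs_self _).trans (hMg x hx))
  have hfinn : IsFiniteMeasure μn :=
    hfin _ hgmeas.neg (fun x hx => (neg_le_abs _).trans (hMg x hx))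
  have hcompl : ∀ f : E3 → ℝ,
      ((volume.restrict Q).withDensity (fun x => ENNReal.ofReal (f x))) Qᶜ = 0 := by
    intro f
    rw [withDensity_apply _ hQm.compl, Measure.restrict_restrict hQm.compl,
      Set.compl_inter_self, Measure.restrict_empty, lintegral_zero_measure]
  have hΓm : MeasurableSet ((Ioo c d ×ˢ ({0} : Set ℝ)) ×ˢ Ioo 0 L) :=
    (measurableSet_Ioo.prod (measurableSet_singleton 0)).prod measurableSet_Ioo
  have hΓ0 : (volume.restrict Q) ((Ioo c d ×ˢ ({0} : Set ℝ)) ×ˢ Ioo 0 L) = 0 := by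
    rw [Measure.restrict_apply hΓm]
    exact measure_mono_null Set.inter_subset_left (vol_interface c d L)
  have hΓ : ∀ f : E3 → ℝ,
      ((volume.restrict Q).withDensity (fun x => ENNReal.ofReal (f x)))
        ((Ioo c d ×ˢ ({0} : Set ℝ)) ×ˢ Ioo 0 L) = 0 := by
    intro f
    rw [withDensity_apply _ hΓm]
    exact setLIntegral_measure_zero _ _ hΓ0
  refine ⟨μp, μn, hfinp, hfinn, ?_, hcompl _, hcompl _, ?_, hΓ _, hΓ _, ?_⟩
  · -- MemLp
    obtain ⟨Mv, hMv⟩ := exists_boundOn (F := ℝ × ℝ) hv.continuous (bounded_box c d (-1) 1 0 L)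
    have hmeasT : Measurable (fun p : E3 =>
        if 0 ≤ p.1.2 then v p
        else ((v ((p.1.1, -p.1.2), p.2)).1, -(v ((p.1.1, -p.1.2), p.2)).2)) := by
      have hs : MeasurableSet {x : E3 | 0 ≤ x.1.2} :=
        measurableSet_le measurable_const (measurable_snd.comp measurable_fst)
      have hm2 : Measurable fun p : E3 => ((v (rfl2 p)).1, -(v (rfl2 p)).2) :=
        (((hv.continuous.comp continuous_rfl2).measurable).fst).prodMk
          (((hv.continuous.comp continuous_rfl2).measurable).snd.neg)
      exact Measurable.ite hs hv.continuous.measurable hm2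
    refine MemLp.of_bound hmeasT.aestronglyMeasurable Mv ?_
    rw [ae_restrict_iff' hQm]
    refine Filter.Eventually.of_forall fun x hx => ?_
    by_cases h : 0 ≤ x.1.2
    · rw [if_pos h]; exact hMv x hx
    · rw [if_neg h]
      have h2 : rfl2 x ∈ Q := rfl2_mem_Q hx
      have : ‖((v (rfl2 x)).1, -(v (rfl2 x)).2)‖ = ‖v (rfl2 x)‖ := by
        simp [Prod.norm_def, norm_neg]
      rw [show ((x.1.1, -x.1.2), x.2) = rfl2 x from rfl, this]
      exact hMv _ h2
  · -- weak identity
    intro φ hφ hφs hsupp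
    obtain ⟨Cφ, hCφ⟩ := exists_bound hφ.continuous hφs
    have step1 : ∫ x in Q,
        (((if 0 ≤ x.1.2 then v x
            else ((v ((x.1.1, -x.1.2), x.2)).1, -(v ((x.1.1, -x.1.2), x.2)).2)).1 *
              fderiv ℝ φ x ((0, 1), 0)) -
          ((if 0 ≤ x.1.2 then v x
            else ((v ((x.1.1, -x.1.2), x.2)).1, -(v ((x.1.1, -x.1.2), x.2)).2)).2 *
              fderiv ℝ φ x ((1, 0), 0))) =
        ∫ x in Q, (Tv1 v x * fderiv ℝ φ x ((0, 1), 0) - Tv2 v x * fderiv ℝ φ x ((1, 0), 0)) := by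
      refine setIntegral_congr_fun hQm (fun x _ => ?_)
      by_cases h : 0 ≤ x.1.2 <;> simp [Tv1, Tv2, rfl2, h]
    rw [step1, weak_id hcd.le hv hφ hφs hsupp]
    -- now compute the μp/μn integrals
    have hintp : Integrable (fun x => ((gfun v x).toNNReal : ℝ) * φ x) (volume.restrict Q) := by
      refine integrable_bdd_on hQm (((measurable_coe_nnreal_real.comp
        hgmeas.real_toNNReal).mul hφ.continuous.measurable).aestronglyMeasurable)
        (C := |Mg| * |Cφ|) (fun x hx => ?_)
      rw [abs_mul]
      exact mul_le_mul ((coe_toNNReal_abs_le (hMg x hx)).trans (le_abs_self Mg))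
        ((hCφ x).trans (le_abs_self Cφ)) (abs_nonneg _) (abs_nonneg _)
    have hintn : Integrable (fun x => (((-gfun v x).toNNReal : ℝ)) * φ x) (volume.restrict Q) := by
      refine integrable_bdd_on hQm (((measurable_coe_nnreal_real.comp
        hgmeas.neg.real_toNNReal).mul hφ.continuous.measurable).aestronglyMeasurable)
        (C := |Mg| * |Cφ|) (fun x hx => ?_)
      rw [abs_mul]
      refine mul_le_mul ((coe_toNNReal_abs_le ?_).trans (le_abs_self Mg))
        ((hCφ x).trans (le_abs_self Cφ)) (abs_nonneg _) (abs_nonneg _)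
      rw [abs_neg]; exact hMg x hx
    have hμpint : ∫ x, φ x ∂μp = ∫ x, ((gfun v x).toNNReal : ℝ) * φ x ∂(volume.restrict Q) := by
      rw [hμp]
      rw [show (fun x => ENNReal.ofReal (gfun v x)) =
        (fun x => (((gfun v x).toNNReal : ℝ≥0) : ℝ≥0∞)) from rfl]
      rw [integral_withDensity_eq_integral_smul hgmeas.real_toNNReal]
      simp [NNReal.smul_def, smul_eq_mul]
    have hμnint : ∫ x, φ x ∂μn = ∫ x, (((-gfun v x).toNNReal : ℝ)) * φ x ∂(volume.restrict Q) := by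
      rw [hμn]
      rw [show (fun x => ENNReal.ofReal (-gfun v x)) =
        (fun x => ((((-gfun v x)).toNNReal : ℝ≥0) : ℝ≥0∞)) from rfl]
      rw [integral_withDensity_eq_integral_smul (f := fun x => (-gfun v x).toNNReal) hgmeas.neg.real_toNNReal]
      simp [NNReal.smul_def, smul_eq_mul]
    rw [hμpint, hμnint, ← MeasureTheory.integral_sub hintp hintn]
    refine setIntegral_congr_fun hQm (fun x _ => ?_)
    exact (toNNReal_sub_mul (gfun v x) (φ x)).symm
  · -- mass bound
    have habs : Integrable (fun x => |gfun v x|) (volume.restrict Q) :=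
      integrable_bdd_on hQm hgmeas.abs.aestronglyMeasurable
        (fun x hx => by simpa using hMg x hx)
    have hsum : μp Set.univ + μn Set.univ =
        ∫⁻ x, ENNReal.ofReal |gfun v x| ∂(volume.restrict Q) := by
      rw [hμp, hμn, withDensity_apply _ MeasurableSet.univ,
        withDensity_apply _ MeasurableSet.univ, setLIntegral_univ, setLIntegral_univ,
        ← lintegral_add_left hgmeas.ennreal_ofReal]
      exact lintegral_congr fun x => ofReal_add_ofReal_neg (gfun v x)
    rw [hsum, ← MeasureTheory.ofReal_integral_eq_lintegral_ofReal habs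
      (Filter.Eventually.of_forall fun x => abs_nonneg _)]
    have : ∫ x in Q, |gfun v x| =
        2 * ∫ x in (Ioo c d ×ˢ Ioo (0:ℝ) 1) ×ˢ Ioo 0 L, |curl2 v x| := abs_g_split hv c d L
    unfold curl2 at this
    rw [this]
end

section
/- Let (με) be a family of finite signed Radon measures on a bounded open set D ⊆ ℝ³, and suppose ‖με‖_{(C⁰_c(D))*} ≤ M₀(ε) and ‖με‖_{(C^{0,1}_c(D))*} ≤ M₁(ε). Then for every 0 < α < 1 there is a constant C = C(α, D) such that ‖με‖_{(C^{0,α}_c(D))*} ≤ C M₀(ε)^{1−α} M₁(ε)^{α}. -/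
/-!
Fix a scale `0 < δ ≤ 1`. An `α`-Hölder function `φ` with constant `c₁` satisfies
`φ x ≤ φ y + L d(x,y) + a` with `L = c₁ δ^(α-1)` and `a = c₁ δ^α`, so its inf-convolution
`F x = inf_y (φ y + L d(x,y))` is `L`-Lipschitz with `φ - a ≤ F ≤ φ`. Soft-thresholding `F` at
level `a` gives a Lipschitz `ψ` that vanishes wherever `φ` does and is `2a`-close to `φ`.
Testing `μ` against `ψ` costs `O(δ^(α-1)) M₁` and against `φ - ψ` costs `O(δ^α) M₀`;
when `M₁ ≤ M₀` the choice `δ = M₁ / M₀` balances the two terms into `M₀^(1-α) M₁^α`,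
and otherwise the bound `M₀ ≤ M₀^(1-α) M₁^α` from `sup |φ| ≤ 1` suffices.
-/

open MeasureTheory

/-- Integral of a function against a signed measure, via its Jordan decomposition. -/
noncomputable def sInt {X : Type*} [MeasurableSpace X]
    (μ : SignedMeasure X) (φ : X → ℝ) : ℝ :=
  (∫ x, φ x ∂μ.toJordanDecomposition.posPart) - ∫ x, φ x ∂μ.toJordanDecomposition.negPart

open Function Filter Topology
open scoped NNReal

noncomputable def softThreshold (a t : ℝ) : ℝ := t - max (-a) (min a t)

lemma softThreshold_eq_zero {a t : ℝ} (h : |t| ≤ a) : softThreshold a t = 0 := by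
  rw [abs_le] at h
  rw [softThreshold, min_eq_right h.2, max_eq_right h.1, sub_self]

lemma abs_softThreshold_sub_le {a : ℝ} (ha : 0 ≤ a) (t : ℝ) : |softThreshold a t - t| ≤ a := by
  rw [softThreshold, sub_sub_cancel_left, abs_neg, abs_le]
  exact ⟨le_max_left _ _, max_le (by linarith) (min_le_left _ _)⟩

lemma lipschitzWith_softThreshold (a : ℝ) : LipschitzWith 2 (softThreshold a) := by
  have h := LipschitzWith.id.sub ((LipschitzWith.id.const_min a).const_max (-a))
  rwa [one_add_one_eq_two] at h

section InfConvolution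

variable {X : Type*} [PseudoMetricSpace X] {φ : X → ℝ} {K : ℝ≥0} {a : ℝ}

noncomputable def infConv (φ : X → ℝ) (K : ℝ≥0) (x : X) : ℝ :=
  ⨅ y, φ y + K * dist x y

lemma bddBelow_range_add_mul_dist (h : ∀ x y, φ x ≤ φ y + K * dist x y + a) (x : X) :
    BddBelow (Set.range fun y => φ y + K * dist x y) :=
  ⟨φ x - a, by rintro _ ⟨y, rfl⟩; linarith [h x y]⟩

lemma infConv_le (h : ∀ x y, φ x ≤ φ y + K * dist x y + a) (x : X) : infConv φ K x ≤ φ x := by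
  simpa [infConv] using ciInf_le (bddBelow_range_add_mul_dist h x) x

lemma sub_le_infConv (h : ∀ x y, φ x ≤ φ y + K * dist x y + a) (x : X) :
    φ x - a ≤ infConv φ K x :=
  have : Nonempty X := ⟨x⟩
  le_ciInf fun y => by linarith [h x y]

lemma lipschitzWith_infConv (h : ∀ x y, φ x ≤ φ y + K * dist x y + a) :
    LipschitzWith K (infConv φ K) := by
  refine LipschitzWith.of_le_add_mul K fun x y => ?_
  have : Nonempty X := ⟨x⟩
  rw [← sub_le_iff_le_add]
  refine le_ciInf fun z => ?_
  rw [sub_le_iff_le_add]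
  calc infConv φ K x ≤ φ z + K * dist x z := ciInf_le (bddBelow_range_add_mul_dist h x) z
    _ ≤ φ z + K * dist y z + K * dist x y := by
      rw [add_assoc, ← mul_add, add_comm (dist y z)]
      gcongr
      apply dist_triangle

theorem exists_lipschitzWith_abs_sub_le (h : ∀ x y, φ x ≤ φ y + K * dist x y + a) :
    ∃ ψ : X → ℝ, LipschitzWith (2 * K) ψ ∧ (∀ x, |ψ x - φ x| ≤ 2 * a) ∧
      support ψ ⊆ support φ := by
  refine ⟨fun x => softThreshold a (infConv φ K x),
    (lipschitzWith_softThreshold a).comp (lipschitzWith_infConv h), fun x => ?_, fun x hx => ?_⟩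
  · have ha : 0 ≤ a := by simpa using h x x
    have hF : |infConv φ K x - φ x| ≤ a := by
      rw [abs_le]
      constructor <;> linarith [infConv_le h x, sub_le_infConv h x]
    calc |softThreshold a (infConv φ K x) - φ x|
        ≤ |softThreshold a (infConv φ K x) - infConv φ K x| + |infConv φ K x - φ x| :=
          abs_sub_le _ _ _
      _ ≤ 2 * a := by linarith [abs_softThreshold_sub_le ha (infConv φ K x)]
  · by_contra hφx
    rw [mem_support, not_not] at hφx
    refine hx (softThreshold_eq_zero ?_)
    rw [abs_le]
    constructor <;> linarith [infConv_le h x, sub_le_infConv h x]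

end InfConvolution

lemma rpow_le_rpow_sub_one_mul_add_rpow {d δ r : ℝ} (hd : 0 ≤ d) (hδ : 0 < δ) (hr0 : 0 ≤ r)
    (hr1 : r ≤ 1) : d ^ r ≤ δ ^ (r - 1) * d + δ ^ r := by
  rcases le_total d δ with hdδ | hδd
  · have := Real.rpow_le_rpow hd hdδ hr0
    have : 0 ≤ δ ^ (r - 1) * d := by positivity
    linarith
  · have hd0 : 0 < d := hδ.trans_le hδd
    have hpow : d ^ (r - 1) ≤ δ ^ (r - 1) := Real.rpow_le_rpow_of_nonpos hδ hδd (by linarith)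
    have : 0 ≤ δ ^ r := by positivity
    calc d ^ r = d ^ (r - 1) * d := by rw [Real.rpow_sub_one hd0.ne', div_mul_cancel₀ _ hd0.ne']
      _ ≤ δ ^ (r - 1) * d := by gcongr
      _ ≤ δ ^ (r - 1) * d + δ ^ r := by linarith

lemma HolderWith.le_add_mul_dist_add {X : Type*} [PseudoMetricSpace X] {C r : ℝ≥0}
    {φ : X → ℝ} (hφ : HolderWith C r φ) (hr : r ≤ 1) {δ : ℝ} (hδ : 0 < δ) (x y : X) :
    φ x ≤ φ y + C * δ ^ ((r : ℝ) - 1) * dist x y + C * δ ^ (r : ℝ) := by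
  have hφxy : φ x - φ y ≤ C * dist x y ^ (r : ℝ) :=
    (le_abs_self _).trans (hφ.dist_le x y)
  have hinterp := rpow_le_rpow_sub_one_mul_add_rpow dist_nonneg hδ r.coe_nonneg
    (by exact_mod_cast hr : (r : ℝ) ≤ 1) (d := dist x y)
  have := mul_le_mul_of_nonneg_left hinterp C.coe_nonneg
  linarith

section SignedIntegral

variable {X : Type*} [MeasurableSpace X] (μ : SignedMeasure X)

lemma sInt_const_mul (c : ℝ) (f : X → ℝ) : sInt μ (fun x => c * f x) = c * sInt μ f := by
  simp only [sInt, integral_const_mul]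
  ring

lemma sInt_sub [TopologicalSpace X] [OpensMeasurableSpace X] {f g : X → ℝ} (hf : Continuous f)
    (hf' : HasCompactSupport f) (hg : Continuous g) (hg' : HasCompactSupport g) :
    sInt μ (fun x => f x - g x) = sInt μ f - sInt μ g := by
  simp only [sInt, integral_sub (hf.integrable_of_hasCompactSupport hf')
    (hg.integrable_of_hasCompactSupport hg')]
  ring

end SignedIntegral

section DualNormBounds

variable {X : Type*} [MeasurableSpace X] {μ : SignedMeasure X} {D : Set X} {η : X → ℝ}

lemma abs_sInt_le_mul_of_abs_le [TopologicalSpace X] {M₀ : ℝ}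
    (h0 : ∀ φ : X → ℝ, Continuous φ → HasCompactSupport φ → tsupport φ ⊆ D →
      (∀ x, |φ x| ≤ 1) → |sInt μ φ| ≤ M₀)
    (hc : Continuous η) (hs : HasCompactSupport η) (hD : tsupport η ⊆ D)
    {b : ℝ} (hb : 0 < b) (hη : ∀ x, |η x| ≤ b) : |sInt μ η| ≤ b * M₀ := by
  have h := h0 (fun x => b⁻¹ * η x) (continuous_const.mul hc)
    (hs.mono (support_mul_subset_right _ _)) (tsupport_mul_subset_right.trans hD) fun x => by
      rw [abs_mul, abs_inv, abs_of_pos hb, inv_mul_le_iff₀ hb, mul_one]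
      exact hη x
  rwa [sInt_const_mul, abs_mul, abs_inv, abs_of_pos hb, inv_mul_le_iff₀ hb] at h

lemma abs_sInt_le_mul_of_lipschitzWith [PseudoMetricSpace X] {M₁ : ℝ}
    (h1 : ∀ φ : X → ℝ, ∀ c₀ c₁ : ℝ≥0, Continuous φ → HasCompactSupport φ →
      tsupport φ ⊆ D → (∀ x, |φ x| ≤ c₀) → LipschitzWith c₁ φ →
      (c₀ : ℝ) + (c₁ : ℝ) ≤ 1 → |sInt μ φ| ≤ M₁)
    (hs : HasCompactSupport η) (hD : tsupport η ⊆ D) {b : ℝ} {K : ℝ≥0} (hb : 0 < b)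
    (hη : ∀ x, |η x| ≤ b) (hK : LipschitzWith K η) : |sInt μ η| ≤ (b + K) * M₁ := by
  set s := b + K
  have hs0 : 0 < s := by positivity
  have h := h1 (fun x => s⁻¹ * η x) (b / s).toNNReal (K / s).toNNReal
    (continuous_const.mul hK.continuous) (hs.mono (support_mul_subset_right _ _))
    (tsupport_mul_subset_right.trans hD)
    (fun x => by
      rw [Real.coe_toNNReal _ (by positivity), abs_mul, abs_inv, abs_of_pos hs0, div_eq_inv_mul]
      gcongr
      exact hη x)
    (LipschitzWith.of_dist_le_mul fun x y => by
      rw [Real.coe_toNNReal _ (by positivity), Real.dist_eq, ← mul_sub, abs_mul, abs_inv,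
        abs_of_pos hs0, div_eq_inv_mul, mul_assoc, ← Real.dist_eq]
      gcongr
      exact hK.dist_le_mul x y)
    (by rw [Real.coe_toNNReal _ (by positivity), Real.coe_toNNReal _ (by positivity), ← add_div,
      div_self hs0.ne'])
  rwa [sInt_const_mul, abs_mul, abs_inv, abs_of_pos hs0, inv_mul_le_iff₀ hs0] at h

end DualNormBounds

theorem abs_sInt_le_of_holderWith {X : Type*} [PseudoMetricSpace X] [MeasurableSpace X]
    [OpensMeasurableSpace X] {μ : SignedMeasure X} {D : Set X} {M₀ M₁ : ℝ} (hM₁ : 0 ≤ M₁)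
    (h0 : ∀ φ : X → ℝ, Continuous φ → HasCompactSupport φ → tsupport φ ⊆ D →
      (∀ x, |φ x| ≤ 1) → |sInt μ φ| ≤ M₀)
    (h1 : ∀ φ : X → ℝ, ∀ c₀ c₁ : ℝ≥0, Continuous φ → HasCompactSupport φ →
      tsupport φ ⊆ D → (∀ x, |φ x| ≤ c₀) → LipschitzWith c₁ φ →
      (c₀ : ℝ) + (c₁ : ℝ) ≤ 1 → |sInt μ φ| ≤ M₁)
    {φ : X → ℝ} {c₀ c₁ α : ℝ≥0} (hα : α ≤ 1) (hφc : Continuous φ) (hφs : HasCompactSupport φ)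
    (hφD : tsupport φ ⊆ D) (hφb : ∀ x, |φ x| ≤ c₀) (hφ : HolderWith c₁ α φ)
    (hc : (c₀ : ℝ) + c₁ ≤ 1) {δ : ℝ} (hδ0 : 0 < δ) (hδ1 : δ ≤ 1) :
    |sInt μ φ| ≤ 5 * M₁ * δ ^ ((α : ℝ) - 1) + 2 * M₀ * δ ^ (α : ℝ) := by
  set K : ℝ≥0 := (c₁ * δ ^ ((α : ℝ) - 1)).toNNReal
  set a : ℝ := c₁ * δ ^ (α : ℝ)
  have hK : (K : ℝ) = c₁ * δ ^ ((α : ℝ) - 1) := Real.coe_toNNReal _ (by positivity)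
  obtain ⟨ψ, hψK, hψφ, hψsupp⟩ := exists_lipschitzWith_abs_sub_le (K := K) (a := a)
    fun x y => hK ▸ hφ.le_add_mul_dist_add hα hδ0 x y
  have hc₀ : (c₀ : ℝ) ≤ 1 := by linarith [c₁.coe_nonneg]
  have hc₁ : (c₁ : ℝ) ≤ 1 := by linarith [c₀.coe_nonneg]
  have hδα : δ ^ (α : ℝ) ≤ δ ^ ((α : ℝ) - 1) :=
    Real.rpow_le_rpow_of_exponent_ge hδ0 hδ1 (by linarith)
  have hδα1 : 1 ≤ δ ^ ((α : ℝ) - 1) :=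
    Real.one_le_rpow_of_pos_of_le_one_of_nonpos hδ0 hδ1 (by simpa using hα)
  have ha : a ≤ δ ^ (α : ℝ) := mul_le_of_le_one_left (by positivity) hc₁
  have hK1 : (K : ℝ) ≤ δ ^ ((α : ℝ) - 1) := hK ▸ mul_le_of_le_one_left (by positivity) hc₁
  have hψ : |sInt μ ψ| ≤ 5 * M₁ * δ ^ ((α : ℝ) - 1) := by
    have hψb : ∀ x, |ψ x| ≤ 1 + 2 * a := fun x => by
      linarith [abs_sub_abs_le_abs_sub (ψ x) (φ x), hψφ x, (hφb x).trans hc₀]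
    have := abs_sInt_le_mul_of_lipschitzWith h1 (hφs.mono hψsupp)
      ((closure_mono hψsupp).trans hφD) (by positivity) hψb hψK
    push_cast at this
    nlinarith
  have hrest : |sInt μ (fun x => φ x - ψ x)| ≤ 2 * M₀ * δ ^ (α : ℝ) := by
    have hsupp := (support_sub φ ψ).trans (Set.union_subset subset_rfl hψsupp)
    have := abs_sInt_le_mul_of_abs_le (η := fun x => φ x - ψ x) h0 (hφc.sub hψK.continuous) (hφs.mono hsupp)
      ((closure_mono hsupp).trans hφD) (by positivity : 0 < 2 * δ ^ (α : ℝ)) fun x => by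
        rw [abs_sub_comm]
        linarith [hψφ x]
    linarith
  calc |sInt μ φ| = |sInt μ ψ + sInt μ (fun x => φ x - ψ x)| := by
        rw [sInt_sub μ hφc hφs hψK.continuous (hφs.mono hψsupp), add_sub_cancel]
    _ ≤ |sInt μ ψ| + |sInt μ (fun x => φ x - ψ x)| := abs_add_le _ _
    _ ≤ _ := add_le_add hψ hrest

lemma le_mul_rpow_mul_rpow_of_forall_le {I M₀ M₁ A B α : ℝ} (hα0 : 0 < α) (hM₀ : 0 ≤ M₀)
    (hM₁ : 0 ≤ M₁) (hAB : 1 ≤ A + B) (hI₀ : I ≤ M₀)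
    (hI : ∀ δ, 0 < δ → δ ≤ 1 → I ≤ A * M₁ * δ ^ (α - 1) + B * M₀ * δ ^ α) :
    I ≤ (A + B) * M₀ ^ (1 - α) * M₁ ^ α := by
  rcases lt_or_ge M₀ M₁ with hlt | hle
  · have hM₀_eq : M₀ = M₀ ^ (1 - α) * M₀ ^ α := by
      rw [← Real.rpow_add' hM₀ (by norm_num), sub_add_cancel, Real.rpow_one]
    have : M₀ ^ (1 - α) * M₀ ^ α ≤ M₀ ^ (1 - α) * M₁ ^ α := by
      gcongr
    have : 0 ≤ M₀ ^ (1 - α) * M₁ ^ α := by positivity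
    nlinarith
  rcases hM₁.eq_or_lt with rfl | hM₁0
  · have hlim : Tendsto (fun δ : ℝ => A * 0 * δ ^ (α - 1) + B * M₀ * δ ^ α) (𝓝[>] 0) (𝓝 0) := by
      have := ((Real.continuous_rpow_const hα0.le).tendsto 0).const_mul (B * M₀)
      rw [Real.zero_rpow hα0.ne', mul_zero] at this
      simpa using tendsto_nhdsWithin_of_tendsto_nhds this
    rw [Real.zero_rpow hα0.ne', mul_zero]
    exact ge_of_tendsto hlim (eventually_of_mem (Ioo_mem_nhdsGT one_pos)
      fun δ hδ => hI δ hδ.1 hδ.2.le)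
  · have hM₀0 : 0 < M₀ := hM₁0.trans_le hle
    have h₁ : M₁ * (M₁ / M₀) ^ (α - 1) = M₀ ^ (1 - α) * M₁ ^ α := by
      rw [Real.div_rpow hM₁ hM₀, Real.rpow_sub_one hM₁0.ne', Real.rpow_sub_one hM₀0.ne',
        Real.rpow_sub hM₀0, Real.rpow_one]
      field_simp
    have h₀ : M₀ * (M₁ / M₀) ^ α = M₀ ^ (1 - α) * M₁ ^ α := by
      rw [Real.div_rpow hM₁ hM₀, Real.rpow_sub hM₀0, Real.rpow_one]
      field_simp
    calc I ≤ A * (M₁ * (M₁ / M₀) ^ (α - 1)) + B * (M₀ * (M₁ / M₀) ^ α) := by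
          have := hI (M₁ / M₀) (by positivity) (div_le_one_of_le₀ hle hM₀)
          linarith
      _ = (A + B) * M₀ ^ (1 - α) * M₁ ^ α := by rw [h₁, h₀]; ring

theorem stmt17_general (D : Set ((ℝ × ℝ) × ℝ)) (α : NNReal) (hα0 : 0 < α) (hα1 : α < 1) :
    ∃ C : ℝ, 0 < C ∧
      ∀ (μ : SignedMeasure ((ℝ × ℝ) × ℝ)) (M₀ M₁ : ℝ), 0 ≤ M₀ → 0 ≤ M₁ →
        μ.totalVariation Dᶜ = 0 →
        (∀ φ : (ℝ × ℝ) × ℝ → ℝ, Continuous φ → HasCompactSupport φ → tsupport φ ⊆ D →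
          (∀ x, |φ x| ≤ 1) → |sInt μ φ| ≤ M₀) →
        (∀ φ : (ℝ × ℝ) × ℝ → ℝ, ∀ c₀ c₁ : NNReal, Continuous φ → HasCompactSupport φ →
          tsupport φ ⊆ D → (∀ x, |φ x| ≤ c₀) → LipschitzWith c₁ φ →
          (c₀ : ℝ) + (c₁ : ℝ) ≤ 1 → |sInt μ φ| ≤ M₁) →
        ∀ φ : (ℝ × ℝ) × ℝ → ℝ, ∀ c₀ c₁ : NNReal, Continuous φ → HasCompactSupport φ →
          tsupport φ ⊆ D → (∀ x, |φ x| ≤ c₀) → HolderWith c₁ α φ →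
          (c₀ : ℝ) + (c₁ : ℝ) ≤ 1 →
          |sInt μ φ| ≤ C * M₀ ^ (1 - (α : ℝ)) * M₁ ^ (α : ℝ) := by
  refine ⟨5 + 2, by norm_num, ?_⟩
  intro μ M₀ M₁ hM₀ hM₁ _ h0 h1 φ c₀ c₁ hφc hφs hφD hφb hφ hc
  have hsup : |sInt μ φ| ≤ M₀ :=
    h0 φ hφc hφs hφD fun x => (hφb x).trans (by linarith [c₁.coe_nonneg])
  exact le_mul_rpow_mul_rpow_of_forall_le (by exact_mod_cast hα0) hM₀ hM₁ (by norm_num) hsup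
    fun δ hδ0 hδ1 => abs_sInt_le_of_holderWith hM₁ h0 h1 hα1.le hφc hφs hφD hφb hφ hc hδ0 hδ1

/-- Jerrard–Soner interpolation inequality for dual Hölder norms: for a bounded open
`D ⊆ ℝ³` and `0 < α < 1` there is `C = C(α,D)` such that any finite signed Radon
measure `μ` on `D` with `‖μ‖_{(C⁰_c)*} ≤ M₀` and `‖μ‖_{(C^{0,1}_c)*} ≤ M₁` satisfies
`‖μ‖_{(C^{0,α}_c)*} ≤ C M₀^{1−α} M₁^α`. -/
theorem stmt17 (D : Set ((ℝ × ℝ) × ℝ)) (hD : IsOpen D) (hDb : Bornology.IsBounded D)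
    (α : NNReal) (hα0 : 0 < α) (hα1 : α < 1) :
    ∃ C : ℝ, 0 < C ∧
      ∀ (μ : SignedMeasure ((ℝ × ℝ) × ℝ)) (M₀ M₁ : ℝ), 0 ≤ M₀ → 0 ≤ M₁ →
        μ.totalVariation Dᶜ = 0 →
        (∀ φ : (ℝ × ℝ) × ℝ → ℝ, Continuous φ → HasCompactSupport φ → tsupport φ ⊆ D →
          (∀ x, |φ x| ≤ 1) → |sInt μ φ| ≤ M₀) →
        (∀ φ : (ℝ × ℝ) × ℝ → ℝ, ∀ c₀ c₁ : NNReal, Continuous φ → HasCompactSupport φ →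
          tsupport φ ⊆ D → (∀ x, |φ x| ≤ c₀) → LipschitzWith c₁ φ →
          (c₀ : ℝ) + (c₁ : ℝ) ≤ 1 → |sInt μ φ| ≤ M₁) →
        ∀ φ : (ℝ × ℝ) × ℝ → ℝ, ∀ c₀ c₁ : NNReal, Continuous φ → HasCompactSupport φ →
          tsupport φ ⊆ D → (∀ x, |φ x| ≤ c₀) → HolderWith c₁ α φ →
          (c₀ : ℝ) + (c₁ : ℝ) ≤ 1 →
          |sInt μ φ| ≤ C * M₀ ^ (1 - (α : ℝ)) * M₁ ^ (α : ℝ) :=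
  stmt17_general D α hα0 hα1
end
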